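/- L∞ estimate: Let L, ρ, μ, T > 0, let G ∈ C^∞(ℝ) with G ≥ 0, and let u : [0,T]×[0,L] → ℝ be smooth (C² in t and C⁴ in x, with continuous mixed derivative ∂_t∂²ₓu) satisfying ρ∂²_t u = −μ∂⁴ₓu − G'(u) on [0,T]×(0,L) and the boundary conditions ∂²ₓu(t,0) = ∂²ₓu(t,L) = ∂³ₓu(t,0) = ∂³ₓu(t,L) = 0 for all t ∈ [0,T]. Then there is a constant C, depending only on ρ, μ, L, T, on ‖u(0,·)‖_{L²(0,L)} and on the initial energy E(0) = ∫₀^L ((ρ(∂_t u(0,x))² + μ(∂²ₓu(0,x))²)/2 + G(u(0,x))) dx, such that |u(t,x)| ≤ C for all (t,x) ∈ [0,T]×[0,L]. -/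

import Mathlib

open MeasureTheory Filter Set intervalIntegral Real

private lemma beam_bound {T L : ℝ} {v : ℝ → ℝ → ℝ}
    (hv : ContinuousOn (fun p : ℝ × ℝ => v p.1 p.2) (Icc 0 T ×ˢ Icc 0 L)) :
    ∃ B : ℝ, 0 ≤ B ∧ ∀ t ∈ Icc (0:ℝ) T, ∀ x ∈ Icc (0:ℝ) L, |v t x| ≤ B := by
  obtain ⟨B, hB⟩ := (isCompact_Icc.prod isCompact_Icc).exists_bound_of_continuousOn hv
  exact ⟨max B 0, le_max_right _ _, fun t ht x hx =>
    le_trans (hB (t, x) ⟨ht, hx⟩) (le_max_left _ _)⟩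

private lemma beam_ii {a b : ℝ} (hab : a ≤ b) {f : ℝ → ℝ}
    (hf : ContinuousOn f (Icc a b)) : IntervalIntegrable f volume a b :=
  ContinuousOn.intervalIntegrable (by rwa [uIcc_of_le hab])

private lemma beam_param_deriv {a b : ℝ} (hab : a ≤ b) {f f' : ℝ → ℝ → ℝ} {t₀ ε B : ℝ}
    (hε : 0 < ε)
    (hdiff : ∀ x ∈ Icc a b, ∀ t ∈ Metric.ball t₀ ε, HasDerivAt (fun τ => f τ x) (f' t x) t)
    (hcont : ∀ t ∈ Metric.ball t₀ ε, ContinuousOn (fun x => f t x) (Icc a b))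
    (hcont' : ContinuousOn (fun x => f' t₀ x) (Icc a b))
    (hB : ∀ t ∈ Metric.ball t₀ ε, ∀ x ∈ Icc a b, |f' t x| ≤ B) :
    HasDerivAt (fun τ => ∫ x in a..b, f τ x) (∫ x in a..b, f' t₀ x) t₀ := by
  have ht₀ : t₀ ∈ Metric.ball t₀ ε := Metric.mem_ball_self hε
  have hIcc : uIoc a b ⊆ Icc a b := by rw [uIoc_of_le hab]; exact Ioc_subset_Icc_self
  have hmeas : ∀ t ∈ Metric.ball t₀ ε,
      AEStronglyMeasurable (f t) (volume.restrict (uIoc a b)) := fun t ht =>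
    ((hcont t ht).mono hIcc).aestronglyMeasurable measurableSet_uIoc
  refine (intervalIntegral.hasDerivAt_integral_of_dominated_loc_of_deriv_le (F := f) (F' := f')
    (Metric.ball_mem_nhds t₀ hε) (eventually_of_mem (Metric.ball_mem_nhds t₀ hε) hmeas)
    (beam_ii hab (hcont t₀ ht₀))
    ((hcont'.mono hIcc).aestronglyMeasurable measurableSet_uIoc)
    (ae_of_all _ fun x hx t ht => by
      rw [Real.norm_eq_abs]; exact hB t ht x (hIcc hx))
    ((intervalIntegrable_const (c := B)))
    (ae_of_all _ fun x hx t ht => hdiff x (hIcc hx) t ht)).2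

private lemma beam_integral_abs_le {a b c : ℝ} (hab : a ≤ b) {f : ℝ → ℝ}
    (hf : ContinuousOn f (Icc a b)) (hc : ∀ x ∈ Icc a b, |f x| ≤ c) :
    |∫ x in a..b, f x| ≤ (b - a) * c := by
  have h1 : |∫ x in a..b, f x| ≤ ∫ x in a..b, |f x| :=
    intervalIntegral.abs_integral_le_integral_abs hab
  have h2 : ∫ x in a..b, |f x| ≤ ∫ x in a..b, c := by
    refine intervalIntegral.integral_mono_on hab ?_ intervalIntegrable_const hc
    exact beam_ii hab hf.abs
  simpa using h1.trans h2

private lemma beam_antitone_of_deriv {f f' : ℝ → ℝ} {T : ℝ}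
    (hd : ∀ t ∈ Ioo (0:ℝ) T, HasDerivAt f (f' t) t) (h0 : ∀ t ∈ Ioo (0:ℝ) T, f' t ≤ 0) :
    ∀ s ∈ Ioo (0:ℝ) T, ∀ t ∈ Ioo (0:ℝ) T, s ≤ t → f t ≤ f s := by
  intro s hs t ht hst
  rcases eq_or_lt_of_le hst with rfl | h
  · exact le_refl _
  have hsub : Icc s t ⊆ Ioo 0 T := Icc_subset_Ioo hs.1 ht.2
  have hcont : ContinuousOn f (Icc s t) := fun x hx =>
    (hd x (hsub hx)).continuousAt.continuousWithinAt
  obtain ⟨c, hc, hceq⟩ := exists_hasDerivAt_eq_slope f f' h hcont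
    (fun x hx => hd x (hsub ⟨hx.1.le, hx.2.le⟩))
  have h1 : f' c ≤ 0 := h0 c (hsub ⟨hc.1.le, hc.2.le⟩)
  have h2 : f t - f s = f' c * (t - s) := by
    rw [hceq, div_mul_cancel₀]
    linarith
  nlinarith

private lemma beam_primitive_hasDerivAt {a b x : ℝ} {h : ℝ → ℝ} (hx : x ∈ Ioo a b)
    (hcont : ContinuousOn h (Icc a b)) :
    HasDerivAt (fun y => ∫ z in a..y, h z) (h x) x := by
  refine intervalIntegral.integral_hasDerivAt_right
    (beam_ii hx.1.le (hcont.mono (Icc_subset_Icc le_rfl hx.2.le))) ?_ ?_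
  · exact ⟨Icc a b, Icc_mem_nhds hx.1 hx.2, hcont.aestronglyMeasurable measurableSet_Icc⟩
  · exact hcont.continuousAt (Icc_mem_nhds hx.1 hx.2)

private lemma beam_patch_mono {f : ℝ → ℝ} {T K : ℝ} (hT : 0 < T) (hK : 0 ≤ K)
    (hlip : ∀ s ∈ Icc (0:ℝ) T, ∀ t ∈ Icc (0:ℝ) T, |f t - f s| ≤ K * |t - s|)
    (hmono : ∀ s ∈ Ioo (0:ℝ) T, ∀ t ∈ Ioo (0:ℝ) T, s ≤ t → f t ≤ f s) :
    ∀ t ∈ Icc (0:ℝ) T, f t ≤ f 0 := by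
  intro t ht
  refine le_of_forall_pos_le_add fun δ hδ => ?_
  set d : ℝ := min (T / 3) (δ / (2 * K + 1)) with hd
  have hd0 : 0 < d := lt_min (by linarith) (div_pos hδ (by linarith))
  have hdT3 : d ≤ T / 3 := min_le_left _ _
  have hdδ : d ≤ δ / (2 * K + 1) := min_le_right _ _
  set s : ℝ := min (max t d) (T - d) with hs
  have hds : d ≤ s := le_min (le_max_right _ _) (by linarith)
  have hsIoo : s ∈ Ioo 0 T :=
    ⟨lt_of_lt_of_le hd0 hds, lt_of_le_of_lt (min_le_right _ _) (by linarith)⟩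
  have hdIoo : d ∈ Ioo 0 T := ⟨hd0, by linarith⟩
  have hts : |t - s| ≤ d := by
    rcases le_total t d with h1 | h1
    · have hseq : s = d := by
        rw [hs, max_eq_right h1]; exact min_eq_left (by linarith)
      rw [hseq, abs_le]; exact ⟨by linarith [ht.1], by linarith⟩
    · have hmax : max t d = t := max_eq_left h1
      rcases le_total t (T - d) with h2 | h2
      · have hseq : s = t := by rw [hs, hmax]; exact min_eq_left h2
        rw [hseq]; simpa using hd0.le
      · have hseq : s = T - d := by rw [hs, hmax]; exact min_eq_right h2
        rw [hseq, abs_le]; exact ⟨by linarith, by linarith [ht.2]⟩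
  have h1 : f t - f s ≤ K * d := by
    have h1a := (abs_le.1 (hlip s (Ioo_subset_Icc_self hsIoo) t ht)).2
    have h1b : K * |t - s| ≤ K * d := mul_le_mul_of_nonneg_left hts hK
    linarith
  have h2 : f s ≤ f d := hmono d hdIoo s hsIoo hds
  have h3 : f d - f 0 ≤ K * d := by
    have h3a := (abs_le.1 (hlip 0 (left_mem_Icc.2 hT.le) d (Ioo_subset_Icc_self hdIoo))).2
    have : |d - 0| = d := by rw [sub_zero, abs_of_pos hd0]
    rw [this] at h3a; linarith
  have h4 : 2 * (K * d) ≤ δ := by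
    have : (2 * K + 1) * d ≤ δ := by
      rw [mul_comm, ← le_div_iff₀ (by linarith : (0:ℝ) < 2 * K + 1)]; exact hdδ
    nlinarith
  linarith

private lemma beam_patch_const {f : ℝ → ℝ} {T K : ℝ} (hT : 0 < T) (hK : 0 ≤ K)
    (hlip : ∀ s ∈ Icc (0:ℝ) T, ∀ t ∈ Icc (0:ℝ) T, |f t - f s| ≤ K * |t - s|)
    (hconst : ∀ s ∈ Ioo (0:ℝ) T, ∀ t ∈ Ioo (0:ℝ) T, f s = f t) :
    ∀ t ∈ Icc (0:ℝ) T, f t = f 0 := by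
  intro t ht
  have h1 := beam_patch_mono hT hK hlip (fun s hs t' ht' h => (hconst s hs t' ht').ge) t ht
  have h2 := beam_patch_mono (f := fun x => -f x) hT hK
    (fun s hs t' ht' => by rw [show -f t' - -f s = -(f t' - f s) by ring, abs_neg]
                           exact hlip s hs t' ht')
    (fun s hs t' ht' h => by simp [hconst s hs t' ht']) t ht
  simp at h2
  linarith

private lemma beam_abs_sub_integral {a b c d : ℝ} {h : ℝ → ℝ} (hc : c ∈ Icc a b)
    (hd : d ∈ Icc a b) (hcont : ContinuousOn h (Icc a b)) :
    |∫ y in c..d, h y| ≤ ∫ y in a..b, |h y| := by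
  have key : ∀ p q : ℝ, p ∈ Icc a b → q ∈ Icc a b → p ≤ q →
      |∫ y in p..q, h y| ≤ ∫ y in a..b, |h y| := by
    intro p q hp hq hpq
    have h1 : |∫ y in p..q, h y| ≤ ∫ y in p..q, |h y| :=
      intervalIntegral.abs_integral_le_integral_abs hpq
    have hsub : Icc p q ⊆ Icc a b := Icc_subset_Icc hp.1 hq.2
    have i1 : IntervalIntegrable (fun y => |h y|) volume a p :=
      beam_ii hp.1 ((hcont.mono (Icc_subset_Icc le_rfl hp.2)).abs)
    have i2 : IntervalIntegrable (fun y => |h y|) volume p q :=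
      beam_ii hpq ((hcont.mono hsub).abs)
    have i3 : IntervalIntegrable (fun y => |h y|) volume q b :=
      beam_ii hq.2 ((hcont.mono (Icc_subset_Icc hq.1 le_rfl)).abs)
    have e1 : (∫ y in a..p, |h y|) + ∫ y in p..q, |h y| = ∫ y in a..q, |h y| :=
      intervalIntegral.integral_add_adjacent_intervals i1 i2
    have e2 : (∫ y in a..q, |h y|) + ∫ y in q..b, |h y| = ∫ y in a..b, |h y| :=
      intervalIntegral.integral_add_adjacent_intervals (i1.trans i2) i3
    have n1 : 0 ≤ ∫ y in a..p, |h y| := intervalIntegral.integral_nonneg hp.1 fun y _ => abs_nonneg _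
    have n3 : 0 ≤ ∫ y in q..b, |h y| := intervalIntegral.integral_nonneg hq.2 fun y _ => abs_nonneg _
    linarith
  rcases le_total c d with hcd | hdc
  · exact key c d hc hd hcd
  · rw [intervalIntegral.integral_symm, abs_neg]; exact key d c hd hc hdc

private lemma beam_lip {T C : ℝ} {f f' : ℝ → ℝ} (hf : ∀ τ ∈ Icc (0:ℝ) T, HasDerivAt f (f' τ) τ)
    (hbd : ∀ τ ∈ Icc (0:ℝ) T, |f' τ| ≤ C) {s t : ℝ} (hs : s ∈ Icc (0:ℝ) T)
    (ht : t ∈ Icc (0:ℝ) T) : |f t - f s| ≤ C * |t - s| := by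
  have := (convex_Icc (0:ℝ) T).norm_image_sub_le_of_norm_hasDerivWithin_le
    (fun τ hτ => (hf τ hτ).hasDerivWithinAt)
    (fun τ hτ => by rw [Real.norm_eq_abs]; exact hbd τ hτ) hs ht
  simpa [Real.norm_eq_abs] using this

set_option maxHeartbeats 2000000 in
/-- **L∞ estimate.**  Let `L, ρ, μ, T > 0`.  There is a constant `C`, depending only on
`ρ, μ, L, T`, on the initial `L²` norm `∫₀ᴸ u(0,x)² dx` and on the initial energy
`E(0) = ∫₀ᴸ ((ρ (∂ₜu(0,x))² + μ (∂ₓ²u(0,x))²)/2 + G(u(0,x))) dx`, such that any classical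
solution `u` of the beam equation `ρ ∂ₜ²u = -μ ∂ₓ⁴u - G'(u)` (with `G` smooth and
nonnegative) with free-end boundary conditions satisfies `|u(t,x)| ≤ C` on `[0,T] × [0,L]`.
The constant is quantified as a function `C` of the initial `L²` norm and the initial
energy, chosen after `ρ, μ, L, T` but before `G` and `u`. -/
theorem Linfty_estimate
    (L ρ μ T : ℝ) (hL : 0 < L) (hρ : 0 < ρ) (hμ : 0 < μ) (hT : 0 < T) :
    ∃ C : ℝ → ℝ → ℝ,
      ∀ (G : ℝ → ℝ), ContDiff ℝ (⊤ : ℕ∞) G → (∀ s, 0 ≤ G s) →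
      ∀ (u ut utt ux uxx uxxx uxxxx utxx : ℝ → ℝ → ℝ),
      -- time derivatives
      (∀ x ∈ Icc 0 L, ∀ t ∈ Icc 0 T, HasDerivAt (fun τ => u τ x) (ut t x) t) →
      (∀ x ∈ Icc 0 L, ∀ t ∈ Icc 0 T, HasDerivAt (fun τ => ut τ x) (utt t x) t) →
      -- space derivatives
      (∀ t ∈ Icc 0 T, ∀ x ∈ Icc 0 L, HasDerivAt (fun y => u t y) (ux t x) x) →
      (∀ t ∈ Icc 0 T, ∀ x ∈ Icc 0 L, HasDerivAt (fun y => ux t y) (uxx t x) x) →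
      (∀ t ∈ Icc 0 T, ∀ x ∈ Icc 0 L, HasDerivAt (fun y => uxx t y) (uxxx t x) x) →
      (∀ t ∈ Icc 0 T, ∀ x ∈ Icc 0 L, HasDerivAt (fun y => uxxx t y) (uxxxx t x) x) →
      -- mixed derivative ∂ₜ∂ₓ²u
      (∀ x ∈ Icc 0 L, ∀ t ∈ Icc 0 T, HasDerivAt (fun τ => uxx τ x) (utxx t x) t) →
      -- continuity of the derivatives on [0,T] × [0,L]
      (∀ v ∈ ({ut, utt, ux, uxx, uxxx, uxxxx, utxx} : Set (ℝ → ℝ → ℝ)),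
        ContinuousOn (fun p : ℝ × ℝ => v p.1 p.2) (Icc 0 T ×ˢ Icc 0 L)) →
      -- the PDE ρ ∂ₜ²u = -μ ∂ₓ⁴u - G'(u) on [0,T] × (0,L)
      (∀ t ∈ Icc 0 T, ∀ x ∈ Ioo 0 L,
        ρ * utt t x = -μ * uxxxx t x - deriv G (u t x)) →
      -- free-end boundary conditions
      (∀ t ∈ Icc 0 T,
        uxx t 0 = 0 ∧ uxx t L = 0 ∧ uxxx t 0 = 0 ∧ uxxx t L = 0) →
      ∀ t ∈ Icc 0 T, ∀ x ∈ Icc 0 L,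
        |u t x| ≤ C (∫ y in (0:ℝ)..L, (u 0 y) ^ 2)
          (∫ y in (0:ℝ)..L, ((ρ * (ut 0 y) ^ 2 + μ * (uxx 0 y) ^ 2) / 2 + G (u 0 y))) := by
  refine ⟨fun n e => Real.sqrt (34 * ((n + 2 * e / ρ) * Real.exp T) / L
      + L ^ 2 * (L + 2 * e / μ) ^ 2 / 16), ?_⟩
  intro G hG hGnn u ut utt ux uxx uxxx uxxxx utxx hut hutt hux huxx huxxx huxxxx hutxx
    hcont hPDE hBC
  have h0T : (0:ℝ) ∈ Icc (0:ℝ) T := left_mem_Icc.2 hT.le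
  have h0L : (0:ℝ) ∈ Icc (0:ℝ) L := left_mem_Icc.2 hL.le
  have hLL : L ∈ Icc (0:ℝ) L := right_mem_Icc.2 hL.le
  have hTT : T ∈ Icc (0:ℝ) T := right_mem_Icc.2 hT.le
  -- joint continuity of each derivative
  have jut : ContinuousOn (fun p : ℝ × ℝ => ut p.1 p.2) (Icc 0 T ×ˢ Icc 0 L) := hcont ut (by simp)
  have jutt : ContinuousOn (fun p : ℝ × ℝ => utt p.1 p.2) (Icc 0 T ×ˢ Icc 0 L) :=
    hcont utt (by simp)
  have juxx : ContinuousOn (fun p : ℝ × ℝ => uxx p.1 p.2) (Icc 0 T ×ˢ Icc 0 L) :=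
    hcont uxx (by simp)
  have juxxx : ContinuousOn (fun p : ℝ × ℝ => uxxx p.1 p.2) (Icc 0 T ×ˢ Icc 0 L) :=
    hcont uxxx (by simp)
  have juxxxx : ContinuousOn (fun p : ℝ × ℝ => uxxxx p.1 p.2) (Icc 0 T ×ˢ Icc 0 L) :=
    hcont uxxxx (by simp)
  have jutxx : ContinuousOn (fun p : ℝ × ℝ => utxx p.1 p.2) (Icc 0 T ×ˢ Icc 0 L) :=
    hcont utxx (by simp)
  -- slices in x
  have sliceX : ∀ {v : ℝ → ℝ → ℝ},
      ContinuousOn (fun p : ℝ × ℝ => v p.1 p.2) (Icc 0 T ×ˢ Icc 0 L) →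
      ∀ t ∈ Icc (0:ℝ) T, ContinuousOn (fun x => v t x) (Icc 0 L) := by
    intro v hv t ht
    have := hv.comp ((continuous_const.prodMk continuous_id).continuousOn
      (s := Icc (0:ℝ) L)) (fun x hx => Set.mk_mem_prod ht hx)
    exact this
  have hutC := sliceX jut
  have huttC := sliceX jutt
  have huxxC := sliceX juxx
  have huxxxC := sliceX juxxx
  have huxxxxC := sliceX juxxxx
  have hutxxC := sliceX jutxx
  have huC : ∀ t ∈ Icc (0:ℝ) T, ContinuousOn (fun x => u t x) (Icc 0 L) :=
    fun t ht x hx => (hux t ht x hx).continuousAt.continuousWithinAt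
  have huxC : ∀ t ∈ Icc (0:ℝ) T, ContinuousOn (fun x => ux t x) (Icc 0 L) :=
    fun t ht x hx => (huxx t ht x hx).continuousAt.continuousWithinAt
  -- uniform bounds
  obtain ⟨Cut, hCut0, hCutB⟩ := beam_bound jut
  obtain ⟨Cutt, hCutt0, hCuttB⟩ := beam_bound jutt
  obtain ⟨Cuxx, hCuxx0, hCuxxB⟩ := beam_bound juxx
  obtain ⟨Cutxx, hCutxx0, hCutxxB⟩ := beam_bound jutxx
  -- bound on u
  obtain ⟨R0, hR0B⟩ := isCompact_Icc.exists_bound_of_continuousOn (huC 0 h0T)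
  set R : ℝ := max R0 0 + Cut * T with hRdef
  have hR0 : 0 ≤ R := by positivity
  have hRB : ∀ t ∈ Icc (0:ℝ) T, ∀ x ∈ Icc (0:ℝ) L, |u t x| ≤ R := by
    intro t ht x hx
    have h1 : |u t x - u 0 x| ≤ Cut * |t - 0| :=
      beam_lip (f := fun τ => u τ x) (fun τ hτ => hut x hx τ hτ)
        (fun τ hτ => hCutB τ hτ x hx) h0T ht
    have h2 : |t - 0| ≤ T := by rw [sub_zero, abs_of_nonneg ht.1]; exact ht.2
    have h3 : |u 0 x| ≤ max R0 0 := le_trans (hR0B x hx) (le_max_left _ _)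
    have h4 : Cut * |t - 0| ≤ Cut * T := mul_le_mul_of_nonneg_left h2 hCut0
    calc |u t x| ≤ |u 0 x| + |u t x - u 0 x| := by
          have := abs_sub_abs_le_abs_sub (u t x) (u 0 x); linarith [abs_sub_comm (u t x) (u 0 x)]
      _ ≤ R := by rw [hRdef]; linarith
  -- G facts
  have hGdiff : ∀ y : ℝ, HasDerivAt G (deriv G y) y :=
    fun y => ((hG.differentiable (by simp)) y).hasDerivAt
  have hG'cont : Continuous (deriv G) := hG.continuous_deriv (by simp)
  obtain ⟨CG, hCGB⟩ := isCompact_Icc.exists_bound_of_continuousOn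
    (hG'cont.continuousOn (s := Icc (-R) R))
  have hCG0 : 0 ≤ CG := le_trans (abs_nonneg _) (hCGB 0 (by constructor <;> linarith))
  have hCG' : ∀ t ∈ Icc (0:ℝ) T, ∀ x ∈ Icc (0:ℝ) L, |deriv G (u t x)| ≤ CG := by
    intro t ht x hx
    have := abs_le.1 (hRB t ht x hx)
    exact hCGB (u t x) ⟨this.1, this.2⟩
  -- the energy and L² functionals
  set ee : ℝ → ℝ → ℝ := fun t x => (ρ * ut t x ^ 2 + μ * uxx t x ^ 2) / 2 + G (u t x) with heedef
  set ee' : ℝ → ℝ → ℝ :=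
    fun t x => ρ * (ut t x * utt t x) + μ * (uxx t x * utxx t x) + deriv G (u t x) * ut t x
    with hee'def
  set EE : ℝ → ℝ := fun t => ∫ x in (0:ℝ)..L, ee t x with hEEdef
  set N : ℝ → ℝ := fun t => ∫ x in (0:ℝ)..L, u t x ^ 2 with hNdef
  set Be : ℝ := ρ * (Cut * Cutt) + μ * (Cuxx * Cutxx) + CG * Cut with hBedef
  have hBe0 : 0 ≤ Be := by positivity
  have heeC : ∀ t ∈ Icc (0:ℝ) T, ContinuousOn (fun x => ee t x) (Icc 0 L) := by
    intro t ht
    exact (((continuousOn_const.mul ((hutC t ht).pow 2)).add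
      (continuousOn_const.mul ((huxxC t ht).pow 2))).div_const 2).add
      (hG.continuous.comp_continuousOn (huC t ht))
  have hee'C : ∀ t ∈ Icc (0:ℝ) T, ContinuousOn (fun x => ee' t x) (Icc 0 L) := by
    intro t ht
    exact ((continuousOn_const.mul ((hutC t ht).mul (huttC t ht))).add
      (continuousOn_const.mul ((huxxC t ht).mul (hutxxC t ht)))).add
      ((hG'cont.comp_continuousOn (huC t ht)).mul (hutC t ht))
  have heder : ∀ x ∈ Icc (0:ℝ) L, ∀ t ∈ Icc (0:ℝ) T,
      HasDerivAt (fun τ => ee τ x) (ee' t x) t := by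
    intro x hx t ht
    have h1 := (hutt x hx t ht).fun_pow 2
    have h2 := (hutxx x hx t ht).fun_pow 2
    have h3 := (hGdiff (u t x)).comp t (hut x hx t ht)
    have := (((h1.const_mul ρ).fun_add (h2.const_mul μ)).div_const 2).fun_add h3
    refine this.congr_deriv ?_
    ring
  have hee'B : ∀ t ∈ Icc (0:ℝ) T, ∀ x ∈ Icc (0:ℝ) L, |ee' t x| ≤ Be := by
    intro t ht x hx
    have b1 : |ut t x * utt t x| ≤ Cut * Cutt := by
      rw [abs_mul]
      exact mul_le_mul (hCutB t ht x hx) (hCuttB t ht x hx) (abs_nonneg _) hCut0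
    have b2 : |uxx t x * utxx t x| ≤ Cuxx * Cutxx := by
      rw [abs_mul]
      exact mul_le_mul (hCuxxB t ht x hx) (hCutxxB t ht x hx) (abs_nonneg _) hCuxx0
    have b3 : |deriv G (u t x) * ut t x| ≤ CG * Cut := by
      rw [abs_mul]
      exact mul_le_mul (hCG' t ht x hx) (hCutB t ht x hx) (abs_nonneg _) hCG0
    have h1 := abs_add_le (ρ * (ut t x * utt t x) + μ * (uxx t x * utxx t x))
      (deriv G (u t x) * ut t x)
    have h2 := abs_add_le (ρ * (ut t x * utt t x)) (μ * (uxx t x * utxx t x))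
    have e1 : |ρ * (ut t x * utt t x)| = ρ * |ut t x * utt t x| := by
      rw [abs_mul, abs_of_pos hρ]
    have e2 : |μ * (uxx t x * utxx t x)| = μ * |uxx t x * utxx t x| := by
      rw [abs_mul, abs_of_pos hμ]
    have m1 := mul_le_mul_of_nonneg_left b1 hρ.le
    have m2 := mul_le_mul_of_nonneg_left b2 hμ.le
    simp only [hee'def, hBedef]
    linarith
  have hEElip : ∀ s ∈ Icc (0:ℝ) T, ∀ t ∈ Icc (0:ℝ) T, |EE t - EE s| ≤ L * Be * |t - s| := by
    intro s hs t ht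
    have hptw : ∀ x ∈ Icc (0:ℝ) L, |ee t x - ee s x| ≤ Be * |t - s| := by
      intro x hx
      exact beam_lip (f := fun τ => ee τ x) (fun τ hτ => heder x hx τ hτ)
        (fun τ hτ => hee'B τ hτ x hx) hs ht
    have hsub : EE t - EE s = ∫ x in (0:ℝ)..L, (ee t x - ee s x) := by
      rw [hEEdef]
      exact (intervalIntegral.integral_sub (beam_ii hL.le (heeC t ht))
        (beam_ii hL.le (heeC s hs))).symm
    rw [hsub]
    have := beam_integral_abs_le hL.le ((heeC t ht).sub (heeC s hs)) hptw
    calc |∫ x in (0:ℝ)..L, (ee t x - ee s x)| ≤ (L - 0) * (Be * |t - s|) := this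
      _ = L * Be * |t - s| := by ring
  have hNlip : ∀ s ∈ Icc (0:ℝ) T, ∀ t ∈ Icc (0:ℝ) T,
      |N t - N s| ≤ L * (2 * R * Cut) * |t - s| := by
    intro s hs t ht
    have hptw : ∀ x ∈ Icc (0:ℝ) L, |u t x ^ 2 - u s x ^ 2| ≤ 2 * R * Cut * |t - s| := by
      intro x hx
      refine beam_lip (f := fun τ => u τ x ^ 2) (f' := fun τ => 2 * u τ x * ut τ x)
        (fun τ hτ => by simpa using (hut x hx τ hτ).fun_pow 2) ?_ hs ht
      intro τ hτ
      have h1 : |2 * u τ x * ut τ x| = 2 * (|u τ x| * |ut τ x|) := by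
        rw [abs_mul, abs_mul, abs_two]; ring
      rw [h1]
      have h2 : |u τ x| * |ut τ x| ≤ R * Cut :=
        mul_le_mul (hRB τ hτ x hx) (hCutB τ hτ x hx) (abs_nonneg _) hR0
      linarith
    have hsub : N t - N s = ∫ x in (0:ℝ)..L, (u t x ^ 2 - u s x ^ 2) := by
      rw [hNdef]
      exact (intervalIntegral.integral_sub (beam_ii hL.le ((huC t ht).pow 2))
        (beam_ii hL.le ((huC s hs).pow 2))).symm
    rw [hsub]
    have := beam_integral_abs_le hL.le (((huC t ht).pow 2).sub ((huC s hs).pow 2)) hptw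
    calc |∫ x in (0:ℝ)..L, (u t x ^ 2 - u s x ^ 2)| ≤ (L - 0) * (2 * R * Cut * |t - s|) := this
      _ = L * (2 * R * Cut) * |t - s| := by ring
  -- Taylor identity in x
  have hTay : ∀ t ∈ Icc (0:ℝ) T,
      ux t 0 = (u t L - u t 0 - ∫ y in (0:ℝ)..L, (L - y) * uxx t y) / L := by
    intro t ht
    have hg : ∀ y ∈ uIcc (0:ℝ) L,
        HasDerivAt (fun y => u t y + (L - y) * ux t y) ((L - y) * uxx t y) y := by
      intro y hy
      rw [uIcc_of_le hL.le] at hy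
      have h1 : HasDerivAt (fun y : ℝ => L - y) (-1) y := by
        simpa using (hasDerivAt_id y).const_sub L
      have := (hux t ht y hy).fun_add (h1.fun_mul (huxx t ht y hy))
      refine this.congr_deriv ?_
      ring
    have hint : IntervalIntegrable (fun y => (L - y) * uxx t y) volume 0 L :=
      beam_ii hL.le ((continuousOn_const.sub continuousOn_id).mul (huxxC t ht))
    have hfd := intervalIntegral.integral_eq_sub_of_hasDerivAt hg hint
    have h2 : ∫ y in (0:ℝ)..L, (L - y) * uxx t y = u t L - (u t 0 + L * ux t 0) := by
      rw [hfd]; ring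
    rw [eq_div_iff (ne_of_gt hL), h2]; ring
  -- balls inside the time interval
  have hballIoo : ∀ t ∈ Ioo (0:ℝ) T,
      0 < min t (T - t) ∧ Metric.ball t (min t (T - t)) ⊆ Ioo 0 T := by
    intro t ht
    refine ⟨lt_min ht.1 (by linarith [ht.2]), fun τ hτ => ?_⟩
    rw [Metric.mem_ball, Real.dist_eq, abs_lt] at hτ
    constructor
    · have := min_le_left t (T - t); linarith [hτ.1]
    · have := min_le_right t (T - t); linarith [hτ.2]
  -- mixed derivative ∂ₜ∂ₓ u, built by hand (Schwarz-type argument)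
  set gf : ℝ → ℝ := fun t => (ut t L - ut t 0 - ∫ y in (0:ℝ)..L, (L - y) * utxx t y) / L
    with hgfdef
  set utx : ℝ → ℝ → ℝ := fun t x => gf t + ∫ y in (0:ℝ)..x, utxx t y with hutxdef
  have hS1 : ∀ t ∈ Ioo (0:ℝ) T, ∀ x ∈ Icc (0:ℝ) L,
      HasDerivAt (fun τ => ux τ x) (utx t x) t := by
    intro t ht x hx
    obtain ⟨hε, hball⟩ := hballIoo t ht
    have hballIcc : Metric.ball t (min t (T - t)) ⊆ Icc 0 T := hball.trans Ioo_subset_Icc_self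
    have hI : HasDerivAt (fun τ => ∫ y in (0:ℝ)..L, (L - y) * uxx τ y)
        (∫ y in (0:ℝ)..L, (L - y) * utxx t y) t := by
      refine beam_param_deriv hL.le hε (f := fun τ y => (L - y) * uxx τ y)
        (f' := fun τ y => (L - y) * utxx τ y) (B := L * Cutxx) ?_ ?_ ?_ ?_
      · intro y hy τ hτ; exact (hutxx y hy τ (hballIcc hτ)).const_mul (L - y)
      · intro τ hτ; exact (continuousOn_const.sub continuousOn_id).mul (huxxC τ (hballIcc hτ))
      · exact (continuousOn_const.sub continuousOn_id).mul (hutxxC t (Ioo_subset_Icc_self ht))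
      · intro τ hτ y hy
        rw [abs_mul]
        have hy1 : |L - y| ≤ L := by
          rw [abs_le]; constructor
          · linarith [hy.2]
          · linarith [hy.1]
        exact mul_le_mul hy1 (hCutxxB τ (hballIcc hτ) y hy) (abs_nonneg _) hL.le
    have hx0 : HasDerivAt (fun τ => ux τ 0) (gf t) t := by
      have h1 : HasDerivAt
          (fun τ => (u τ L - u τ 0 - ∫ y in (0:ℝ)..L, (L - y) * uxx τ y) / L) (gf t) t := by
        simp only [hgfdef]
        exact (((hut L hLL t (Ioo_subset_Icc_self ht)).sub
          (hut 0 h0L t (Ioo_subset_Icc_self ht))).sub hI).div_const L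
      refine h1.congr_of_eventuallyEq ?_
      filter_upwards [Ioo_mem_nhds ht.1 ht.2] with τ hτ
      exact hTay τ (Ioo_subset_Icc_self hτ)
    have hI2 : HasDerivAt (fun τ => ∫ y in (0:ℝ)..x, uxx τ y) (∫ y in (0:ℝ)..x, utxx t y) t := by
      refine beam_param_deriv hx.1 hε (f := fun τ y => uxx τ y) (f' := fun τ y => utxx τ y)
        (B := Cutxx) ?_ ?_ ?_ ?_
      · intro y hy τ hτ; exact hutxx y (Icc_subset_Icc le_rfl hx.2 hy) τ (hballIcc hτ)
      · intro τ hτ; exact (huxxC τ (hballIcc hτ)).mono (Icc_subset_Icc le_rfl hx.2)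
      · exact (hutxxC t (Ioo_subset_Icc_self ht)).mono (Icc_subset_Icc le_rfl hx.2)
      · intro τ hτ y hy; exact hCutxxB τ (hballIcc hτ) y (Icc_subset_Icc le_rfl hx.2 hy)
    have hFTCx : ∀ τ ∈ Icc (0:ℝ) T, ux τ x = ux τ 0 + ∫ y in (0:ℝ)..x, uxx τ y := by
      intro τ hτ
      have hsub : uIcc (0:ℝ) x ⊆ Icc 0 L := by
        rw [uIcc_of_le hx.1]; exact Icc_subset_Icc le_rfl hx.2
      have := intervalIntegral.integral_eq_sub_of_hasDerivAt
        (f := fun y => ux τ y) (f' := fun y => uxx τ y)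
        (fun y hy => huxx τ hτ y (hsub hy))
        (beam_ii hx.1 ((huxxC τ hτ).mono (Icc_subset_Icc le_rfl hx.2)))
      linarith [this]
    have h2 : HasDerivAt (fun τ => ux τ 0 + ∫ y in (0:ℝ)..x, uxx τ y) (utx t x) t := by
      simp only [hutxdef]; exact hx0.add hI2
    refine h2.congr_of_eventuallyEq ?_
    filter_upwards [Ioo_mem_nhds ht.1 ht.2] with τ hτ
    exact hFTCx τ (Ioo_subset_Icc_self hτ)
  have hutxC : ∀ t ∈ Icc (0:ℝ) T, ContinuousOn (fun y => utx t y) (Icc 0 L) := by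
    intro t ht
    simp only [hutxdef]
    refine continuousOn_const.add ?_
    have hint : IntegrableOn (fun y => utxx t y) (uIcc 0 L) volume := by
      rw [uIcc_of_le hL.le]
      exact (hutxxC t ht).integrableOn_compact isCompact_Icc
    have := intervalIntegral.continuousOn_primitive_interval hint
    rwa [uIcc_of_le hL.le] at this
  have hS3 : ∀ t ∈ Icc (0:ℝ) T, ∀ x ∈ Ioo (0:ℝ) L,
      HasDerivAt (fun y => utx t y) (utxx t x) x := by
    intro t ht x hx
    simp only [hutxdef]
    exact (beam_primitive_hasDerivAt hx (hutxxC t ht)).const_add (gf t)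
  set Cutx : ℝ := (2 * Cut + L * (L * Cutxx)) / L + L * Cutxx with hCutxdef
  have hgfB : ∀ τ ∈ Icc (0:ℝ) T, |gf τ| ≤ (2 * Cut + L * (L * Cutxx)) / L := by
    intro τ hτ
    simp only [hgfdef]
    rw [abs_div, abs_of_pos hL]
    gcongr
    have hIb : |∫ y in (0:ℝ)..L, (L - y) * utxx τ y| ≤ (L - 0) * (L * Cutxx) := by
      refine beam_integral_abs_le hL.le
        ((continuousOn_const.sub continuousOn_id).mul (hutxxC τ hτ)) ?_
      intro y hy
      rw [abs_mul]
      have hy1 : |L - y| ≤ L := by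
        rw [abs_le]; constructor
        · linarith [hy.2]
        · linarith [hy.1]
      exact mul_le_mul hy1 (hCutxxB τ hτ y hy) (abs_nonneg _) hL.le
    have := abs_sub (ut τ L) (ut τ 0)
    have h1 := hCutB τ hτ L hLL
    have h2 := hCutB τ hτ 0 h0L
    have h3 := abs_sub_abs_le_abs_sub (ut τ L - ut τ 0)
      (∫ y in (0:ℝ)..L, (L - y) * utxx τ y)
    have h4 := abs_sub (ut τ L) (ut τ 0)
    calc |ut τ L - ut τ 0 - ∫ y in (0:ℝ)..L, (L - y) * utxx τ y|
        ≤ |ut τ L - ut τ 0| + |∫ y in (0:ℝ)..L, (L - y) * utxx τ y| := abs_sub _ _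
      _ ≤ (|ut τ L| + |ut τ 0|) + (L - 0) * (L * Cutxx) := add_le_add (abs_sub _ _) hIb
      _ ≤ 2 * Cut + L * (L * Cutxx) := by rw [sub_zero]; linarith
  have hutxB : ∀ τ ∈ Icc (0:ℝ) T, ∀ y ∈ Icc (0:ℝ) L, |utx τ y| ≤ Cutx := by
    intro τ hτ y hy
    simp only [hutxdef]
    refine (abs_add_le _ _).trans ?_
    have h2 : |∫ z in (0:ℝ)..y, utxx τ z| ≤ (y - 0) * Cutxx :=
      beam_integral_abs_le hy.1 ((hutxxC τ hτ).mono (Icc_subset_Icc le_rfl hy.2))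
        (fun z hz => hCutxxB τ hτ z (Icc_subset_Icc le_rfl hy.2 hz))
    have h3 : (y - 0) * Cutxx ≤ L * Cutxx := by nlinarith [hy.2, hCutxx0]
    rw [hCutxdef]
    linarith [hgfB τ hτ]
  have hS2id : ∀ t ∈ Ioo (0:ℝ) T, ∀ x ∈ Icc (0:ℝ) L,
      ut t x = ut t 0 + ∫ y in (0:ℝ)..x, utx t y := by
    intro t ht x hx
    obtain ⟨hε, hball⟩ := hballIoo t ht
    have hballIcc : Metric.ball t (min t (T - t)) ⊆ Icc 0 T := hball.trans Ioo_subset_Icc_self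
    have hI3 : HasDerivAt (fun τ => ∫ y in (0:ℝ)..x, ux τ y) (∫ y in (0:ℝ)..x, utx t y) t := by
      refine beam_param_deriv hx.1 hε (f := fun τ y => ux τ y) (f' := fun τ y => utx τ y)
        (B := Cutx) ?_ ?_ ?_ ?_
      · intro y hy τ hτ; exact hS1 τ (hball hτ) y (Icc_subset_Icc le_rfl hx.2 hy)
      · intro τ hτ; exact (huxC τ (hballIcc hτ)).mono (Icc_subset_Icc le_rfl hx.2)
      · exact (hutxC t (Ioo_subset_Icc_self ht)).mono (Icc_subset_Icc le_rfl hx.2)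
      · intro τ hτ y hy; exact hutxB τ (hballIcc hτ) y (Icc_subset_Icc le_rfl hx.2 hy)
    have hRHS : HasDerivAt (fun τ => u τ 0 + ∫ y in (0:ℝ)..x, ux τ y)
        (ut t 0 + ∫ y in (0:ℝ)..x, utx t y) t :=
      (hut 0 h0L t (Ioo_subset_Icc_self ht)).add hI3
    have hFTCu : ∀ τ ∈ Icc (0:ℝ) T, u τ x = u τ 0 + ∫ y in (0:ℝ)..x, ux τ y := by
      intro τ hτ
      have hsub : uIcc (0:ℝ) x ⊆ Icc 0 L := by
        rw [uIcc_of_le hx.1]; exact Icc_subset_Icc le_rfl hx.2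
      have := intervalIntegral.integral_eq_sub_of_hasDerivAt
        (f := fun y => u τ y) (f' := fun y => ux τ y)
        (fun y hy => hux τ hτ y (hsub hy))
        (beam_ii hx.1 ((huxC τ hτ).mono (Icc_subset_Icc le_rfl hx.2)))
      linarith [this]
    have hLHS : HasDerivAt (fun τ => u τ 0 + ∫ y in (0:ℝ)..x, ux τ y) (ut t x) t := by
      refine (hut x hx t (Ioo_subset_Icc_self ht)).congr_of_eventuallyEq ?_
      filter_upwards [Ioo_mem_nhds ht.1 ht.2] with τ hτ
      exact (hFTCu τ (Ioo_subset_Icc_self hτ)).symm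
    exact hLHS.unique hRHS
  have hS2 : ∀ t ∈ Ioo (0:ℝ) T, ∀ x ∈ Ioo (0:ℝ) L,
      HasDerivAt (fun y => ut t y) (utx t x) x := by
    intro t ht x hx
    have hprim : HasDerivAt (fun y => ut t 0 + ∫ z in (0:ℝ)..y, utx t z) (utx t x) x :=
      (beam_primitive_hasDerivAt hx (hutxC t (Ioo_subset_Icc_self ht))).const_add (ut t 0)
    refine hprim.congr_of_eventuallyEq ?_
    filter_upwards [Icc_mem_nhds hx.1 hx.2] with y hy
    exact hS2id t ht y hy
  -- derivative of the energy
  have hEder : ∀ t ∈ Ioo (0:ℝ) T, HasDerivAt EE (∫ x in (0:ℝ)..L, ee' t x) t := by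
    intro t ht
    obtain ⟨hε, hball⟩ := hballIoo t ht
    have hballIcc : Metric.ball t (min t (T - t)) ⊆ Icc 0 T := hball.trans Ioo_subset_Icc_self
    simp only [hEEdef]
    refine beam_param_deriv hL.le hε (f := ee) (f' := ee') (B := Be) ?_ ?_ ?_ ?_
    · intro x hx τ hτ; exact heder x hx τ (hballIcc hτ)
    · intro τ hτ; exact heeC τ (hballIcc hτ)
    · exact hee'C t (Ioo_subset_Icc_self ht)
    · intro τ hτ x hx; exact hee'B τ (hballIcc hτ) x hx
  -- the energy derivative vanishes (integration by parts + PDE + BC)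
  have hflux : ∀ t ∈ Ioo (0:ℝ) T, (∫ x in (0:ℝ)..L, ee' t x) = 0 := by
    intro t ht
    have htIcc := Ioo_subset_Icc_self ht
    have hcongr : ∫ x in (0:ℝ)..L, ee' t x
        = ∫ x in (0:ℝ)..L, μ * (uxx t x * utxx t x - ut t x * uxxxx t x) := by
      refine intervalIntegral.integral_congr_ae ?_
      have hae : ∀ᵐ (x : ℝ) ∂volume, x ≠ L := by
        simp only [ae_iff, not_not, setOf_eq_eq_singleton]
        exact measure_singleton L
      filter_upwards [hae] with x hxne hxI
      rw [uIoc_of_le hL.le] at hxI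
      have hxIoo : x ∈ Ioo (0:ℝ) L := ⟨hxI.1, lt_of_le_of_ne hxI.2 hxne⟩
      have hp := hPDE t htIcc x hxIoo
      simp only [hee'def]
      linear_combination ut t x * hp
    set F : ℝ → ℝ := fun x => uxx t x * utx t x - ut t x * uxxx t x with hFdef
    have hFC : ContinuousOn F (Icc 0 L) :=
      ((huxxC t htIcc).mul (hutxC t htIcc)).sub ((hutC t htIcc).mul (huxxxC t htIcc))
    have hFd : ∀ x ∈ Ioo (0:ℝ) L,
        HasDerivAt F (uxx t x * utxx t x - ut t x * uxxxx t x) x := by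
      intro x hx
      have h1 := (huxxx t htIcc x (Ioo_subset_Icc_self hx)).fun_mul (hS3 t htIcc x hx)
      have h2 := (hS2 t ht x hx).fun_mul (huxxxx t htIcc x (Ioo_subset_Icc_self hx))
      have h3 := h1.fun_sub h2
      simp only [hFdef]
      refine h3.congr_deriv ?_
      ring
    have hFint : IntervalIntegrable (fun x => uxx t x * utxx t x - ut t x * uxxxx t x)
        volume 0 L :=
      beam_ii hL.le (((huxxC t htIcc).mul (hutxxC t htIcc)).sub
        ((hutC t htIcc).mul (huxxxxC t htIcc)))
    have hFTC := intervalIntegral.integral_eq_sub_of_hasDeriv_right_of_le hL.le hFC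
      (fun x hx => (hFd x hx).hasDerivWithinAt) hFint
    obtain ⟨b1, b2, b3, b4⟩ := hBC t htIcc
    have hF0 : F L - F 0 = 0 := by simp [hFdef, b1, b2, b3, b4]
    rw [hcongr, intervalIntegral.integral_const_mul, hFTC, hF0, mul_zero]
  -- energy conservation
  have hEconst : ∀ t ∈ Icc (0:ℝ) T, EE t = EE 0 := by
    refine beam_patch_const hT (by positivity : (0:ℝ) ≤ L * Be) hEElip ?_
    intro s hs t' ht'
    have hmono1 := beam_antitone_of_deriv (f := EE) (f' := fun t => ∫ x in (0:ℝ)..L, ee' t x)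
      hEder (fun t ht => le_of_eq (hflux t ht))
    have hmono2 := beam_antitone_of_deriv (f := fun t => -EE t)
      (f' := fun t => -(∫ x in (0:ℝ)..L, ee' t x))
      (fun t ht => (hEder t ht).neg) (fun t ht => by rw [hflux t ht]; norm_num)
    rcases le_total s t' with h | h
    · have a1 := hmono1 s hs t' ht' h
      have a2 := hmono2 s hs t' ht' h
      linarith
    · have a1 := hmono1 t' ht' s hs h
      have a2 := hmono2 t' ht' s hs h
      linarith
  -- nonnegativity and component bounds of the energy
  have hEnn : 0 ≤ EE 0 := by
    simp only [hEEdef]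
    refine intervalIntegral.integral_nonneg hL.le ?_
    intro x hx
    simp only [heedef]
    have := hGnn (u 0 x)
    positivity
  have hut2 : ∀ t ∈ Icc (0:ℝ) T, (∫ x in (0:ℝ)..L, ut t x ^ 2) ≤ 2 * EE 0 / ρ := by
    intro t ht
    have key : (∫ x in (0:ℝ)..L, ρ / 2 * ut t x ^ 2) ≤ EE t := by
      simp only [hEEdef]
      refine intervalIntegral.integral_mono_on hL.le
        (beam_ii hL.le (continuousOn_const.mul ((hutC t ht).pow 2)))
        (beam_ii hL.le (heeC t ht)) ?_
      intro x hx
      simp only [heedef]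
      have := hGnn (u t x)
      nlinarith [sq_nonneg (uxx t x)]
    rw [hEconst t ht] at key
    rw [intervalIntegral.integral_const_mul] at key
    rw [le_div_iff₀ hρ]
    linarith
  have huxx2 : ∀ t ∈ Icc (0:ℝ) T, (∫ x in (0:ℝ)..L, uxx t x ^ 2) ≤ 2 * EE 0 / μ := by
    intro t ht
    have key : (∫ x in (0:ℝ)..L, μ / 2 * uxx t x ^ 2) ≤ EE t := by
      simp only [hEEdef]
      refine intervalIntegral.integral_mono_on hL.le
        (beam_ii hL.le (continuousOn_const.mul ((huxxC t ht).pow 2)))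
        (beam_ii hL.le (heeC t ht)) ?_
      intro x hx
      simp only [heedef]
      have := hGnn (u t x)
      nlinarith [sq_nonneg (ut t x)]
    rw [hEconst t ht] at key
    rw [intervalIntegral.integral_const_mul] at key
    rw [le_div_iff₀ hμ]
    linarith
  -- L² estimate via a Gronwall-type argument
  set eps : ℝ := 2 * EE 0 / ρ with hepsdef
  have heps0 : 0 ≤ eps := by
    rw [hepsdef]; exact div_nonneg (by linarith) hρ.le
  have hNnn : ∀ t ∈ Icc (0:ℝ) T, 0 ≤ N t := by
    intro t ht
    simp only [hNdef]
    exact intervalIntegral.integral_nonneg hL.le (fun x hx => sq_nonneg _)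
  have hNbd' : ∀ t ∈ Icc (0:ℝ) T, N t ≤ L * R ^ 2 := by
    intro t ht
    simp only [hNdef]
    have hmono : (∫ x in (0:ℝ)..L, u t x ^ 2) ≤ ∫ x in (0:ℝ)..L, R ^ 2 := by
      refine intervalIntegral.integral_mono_on hL.le (beam_ii hL.le ((huC t ht).pow 2))
        ((intervalIntegrable_const (c := R ^ 2))) ?_
      intro x hx
      have h1 := abs_le.1 (hRB t ht x hx)
      exact sq_le_sq' h1.1 h1.2
    have hconst : (∫ x in (0:ℝ)..L, (R:ℝ) ^ 2) = L * R ^ 2 := by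
      rw [intervalIntegral.integral_const, sub_zero, smul_eq_mul]
    linarith
  have hNder : ∀ t ∈ Ioo (0:ℝ) T,
      HasDerivAt N (∫ x in (0:ℝ)..L, 2 * u t x * ut t x) t := by
    intro t ht
    obtain ⟨hε, hball⟩ := hballIoo t ht
    have hballIcc : Metric.ball t (min t (T - t)) ⊆ Icc 0 T := hball.trans Ioo_subset_Icc_self
    simp only [hNdef]
    refine beam_param_deriv hL.le hε (f := fun τ x => u τ x ^ 2)
      (f' := fun τ x => 2 * u τ x * ut τ x) (B := 2 * (R * Cut)) ?_ ?_ ?_ ?_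
    · intro x hx τ hτ; simpa using (hut x hx τ (hballIcc hτ)).fun_pow 2
    · intro τ hτ; exact (huC τ (hballIcc hτ)).pow 2
    · exact (continuousOn_const.mul (huC t (Ioo_subset_Icc_self ht))).mul
        (hutC t (Ioo_subset_Icc_self ht))
    · intro τ hτ x hx
      have h1 : |2 * u τ x * ut τ x| = 2 * (|u τ x| * |ut τ x|) := by
        rw [abs_mul, abs_mul, abs_two]; ring
      rw [h1]
      have h2 : |u τ x| * |ut τ x| ≤ R * Cut :=
        mul_le_mul (hRB τ (hballIcc hτ) x hx) (hCutB τ (hballIcc hτ) x hx) (abs_nonneg _) hR0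
      linarith
  have hNd_le : ∀ t ∈ Ioo (0:ℝ) T, (∫ x in (0:ℝ)..L, 2 * u t x * ut t x) ≤ N t + eps := by
    intro t ht
    have htIcc := Ioo_subset_Icc_self ht
    have h1 : (∫ x in (0:ℝ)..L, 2 * u t x * ut t x)
        ≤ ∫ x in (0:ℝ)..L, (u t x ^ 2 + ut t x ^ 2) := by
      refine intervalIntegral.integral_mono_on hL.le
        (beam_ii hL.le ((continuousOn_const.mul (huC t htIcc)).mul (hutC t htIcc)))
        (beam_ii hL.le (((huC t htIcc).pow 2).add ((hutC t htIcc).pow 2))) ?_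
      intro x hx
      nlinarith [sq_nonneg (u t x - ut t x)]
    have h2 : (∫ x in (0:ℝ)..L, (u t x ^ 2 + ut t x ^ 2))
        = N t + ∫ x in (0:ℝ)..L, ut t x ^ 2 := by
      simp only [hNdef]
      exact intervalIntegral.integral_add (beam_ii hL.le ((huC t htIcc).pow 2))
        (beam_ii hL.le ((hutC t htIcc).pow 2))
    have h3 := hut2 t htIcc
    rw [h2] at h1
    simp only [hepsdef]
    linarith
  set W : ℝ → ℝ := fun t => (N t + eps) * Real.exp (-t) with hWdef
  have hWder : ∀ t ∈ Ioo (0:ℝ) T, HasDerivAt W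
      ((∫ x in (0:ℝ)..L, 2 * u t x * ut t x) * Real.exp (-t)
        + (N t + eps) * (-Real.exp (-t))) t := by
    intro t ht
    have hexp : HasDerivAt (fun τ : ℝ => Real.exp (-τ)) (-Real.exp (-t)) t := by
      simpa [Function.comp_def] using (Real.hasDerivAt_exp (-t)).comp t ((hasDerivAt_id t).neg)
    simp only [hWdef]
    exact ((hNder t ht).add_const eps).mul hexp
  have hWd_le : ∀ t ∈ Ioo (0:ℝ) T,
      (∫ x in (0:ℝ)..L, 2 * u t x * ut t x) * Real.exp (-t)
        + (N t + eps) * (-Real.exp (-t)) ≤ 0 := by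
    intro t ht
    have h1 := hNd_le t ht
    have h2 : (0:ℝ) < Real.exp (-t) := Real.exp_pos _
    nlinarith
  have hWmono := beam_antitone_of_deriv hWder hWd_le
  set KW : ℝ := L * (2 * R * Cut) + (L * R ^ 2 + eps) with hKWdef
  have hKW0 : 0 ≤ KW := by
    rw [hKWdef]
    have c1 : (0:ℝ) ≤ L * (2 * R * Cut) := by positivity
    have c2 : (0:ℝ) ≤ L * R ^ 2 := by positivity
    linarith
  have hWlip : ∀ s ∈ Icc (0:ℝ) T, ∀ t ∈ Icc (0:ℝ) T, |W t - W s| ≤ KW * |t - s| := by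
    intro s hs t ht
    have hid : W t - W s
        = (N t - N s) * Real.exp (-t) + (N s + eps) * (Real.exp (-t) - Real.exp (-s)) := by
      simp only [hWdef]; ring
    have he1 : Real.exp (-t) ≤ 1 := by
      calc Real.exp (-t) ≤ Real.exp 0 := Real.exp_le_exp.2 (by linarith [ht.1])
        _ = 1 := Real.exp_zero
    have he2 : |Real.exp (-t) - Real.exp (-s)| ≤ 1 * |t - s| := by
      refine beam_lip (f := fun τ => Real.exp (-τ)) (f' := fun τ => -Real.exp (-τ)) ?_ ?_ hs ht
      · intro τ hτ; simpa [Function.comp_def] using (Real.hasDerivAt_exp (-τ)).comp τ ((hasDerivAt_id τ).neg)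
      · intro τ hτ
        rw [abs_neg, abs_of_pos (Real.exp_pos _)]
        calc Real.exp (-τ) ≤ Real.exp 0 := Real.exp_le_exp.2 (by linarith [hτ.1])
          _ = 1 := Real.exp_zero
    have hNl := hNlip s hs t ht
    have hNs : N s ≤ L * R ^ 2 := hNbd' s hs
    have hNsnn : 0 ≤ N s + eps := by linarith [hNnn s hs]
    rw [hid, hKWdef]
    have hLRnn : (0:ℝ) ≤ L * (2 * R * Cut) := by positivity
    calc |(N t - N s) * Real.exp (-t) + (N s + eps) * (Real.exp (-t) - Real.exp (-s))|
        ≤ |N t - N s| * Real.exp (-t) + (N s + eps) * |Real.exp (-t) - Real.exp (-s)| := by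
          refine (abs_add_le _ _).trans ?_
          rw [abs_mul, abs_mul, abs_of_pos (Real.exp_pos _), abs_of_nonneg hNsnn]
      _ ≤ (L * (2 * R * Cut) * |t - s|) * 1 + (L * R ^ 2 + eps) * (1 * |t - s|) := by
          have t1 : |N t - N s| * Real.exp (-t) ≤ (L * (2 * R * Cut) * |t - s|) * 1 :=
            mul_le_mul hNl he1 (Real.exp_pos _).le (by positivity)
          have t2 : (N s + eps) * |Real.exp (-t) - Real.exp (-s)|
              ≤ (L * R ^ 2 + eps) * (1 * |t - s|) :=
            mul_le_mul (by linarith) he2 (abs_nonneg _) (by linarith [heps0])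
          linarith
      _ = (L * (2 * R * Cut) + (L * R ^ 2 + eps)) * |t - s| := by ring
  have hWle : ∀ t ∈ Icc (0:ℝ) T, W t ≤ W 0 := beam_patch_mono hT hKW0 hWlip hWmono
  have hNbd : ∀ t ∈ Icc (0:ℝ) T, N t ≤ (N 0 + eps) * Real.exp T := by
    intro t ht
    have h1 := hWle t ht
    have hW0 : W 0 = N 0 + eps := by simp [hWdef]
    have h3 : (N t + eps) * Real.exp (-t) ≤ N 0 + eps := by
      rw [← hW0]; exact h1
    have het : Real.exp (-t) = (Real.exp t)⁻¹ := Real.exp_neg t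
    have hp := Real.exp_pos t
    have h4 : N t + eps ≤ (N 0 + eps) * Real.exp t := by
      rw [het] at h3
      calc N t + eps = ((N t + eps) * (Real.exp t)⁻¹) * Real.exp t := by field_simp
        _ ≤ (N 0 + eps) * Real.exp t := mul_le_mul_of_nonneg_right h3 hp.le
    have h5 : (N 0 + eps) * Real.exp t ≤ (N 0 + eps) * Real.exp T :=
      mul_le_mul_of_nonneg_left (Real.exp_le_exp.2 ht.2) (by linarith [hNnn 0 h0T])
    linarith [heps0]
  -- final pointwise estimate
  intro t ht x hx
  set K : ℝ := ∫ y in (0:ℝ)..L, uxx t y ^ 2 with hKdef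
  have hKnn : 0 ≤ K := by
    rw [hKdef]; exact intervalIntegral.integral_nonneg hL.le (fun y hy => sq_nonneg _)
  have hKle : K ≤ 2 * EE 0 / μ := huxx2 t ht
  obtain ⟨xM, hxM, hmax⟩ := isCompact_Icc.exists_isMaxOn (nonempty_Icc.2 hL.le) ((huC t ht).abs)
  set M : ℝ := |u t xM| with hMdef
  have hMB : ∀ y ∈ Icc (0:ℝ) L, |u t y| ≤ M := fun y hy => hmax hy
  have hM0 : 0 ≤ M := abs_nonneg _
  obtain ⟨ξ, hξ, hmin⟩ := isCompact_Icc.exists_isMinOn (nonempty_Icc.2 hL.le) ((huC t ht).pow 2)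
  have hξbd : L * u t ξ ^ 2 ≤ N t := by
    have h1 : (∫ y in (0:ℝ)..L, u t ξ ^ 2) ≤ ∫ y in (0:ℝ)..L, u t y ^ 2 :=
      intervalIntegral.integral_mono_on hL.le (intervalIntegrable_const)
        (beam_ii hL.le ((huC t ht).pow 2)) (fun y hy => hmin hy)
    have h2 : (∫ y in (0:ℝ)..L, (u t ξ ^ 2 : ℝ)) = L * u t ξ ^ 2 := by
      rw [intervalIntegral.integral_const, sub_zero, smul_eq_mul]
    simp only [hNdef]; linarith
  have hsq : u t xM ^ 2 - u t ξ ^ 2 = ∫ y in ξ..xM, 2 * u t y * ux t y := by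
    have hsub : uIcc ξ xM ⊆ Icc (0:ℝ) L := uIcc_subset_Icc hξ hxM
    have h1 := intervalIntegral.integral_eq_sub_of_hasDerivAt (f := fun y => u t y ^ 2)
      (f' := fun y => 2 * u t y * ux t y)
      (fun y hy => by simpa using (hux t ht y (hsub hy)).fun_pow 2)
      ((((continuousOn_const.mul (huC t ht)).mul (huxC t ht)).mono hsub).intervalIntegrable)
    linarith [h1]
  have habs1 : |∫ y in ξ..xM, 2 * u t y * ux t y| ≤ ∫ y in (0:ℝ)..L, |2 * u t y * ux t y| :=
    beam_abs_sub_integral hξ hxM ((continuousOn_const.mul (huC t ht)).mul (huxC t ht))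
  have hptw : ∀ y ∈ Icc (0:ℝ) L,
      |2 * u t y * ux t y| ≤ 16 / L * u t y ^ 2 + L / 16 * ux t y ^ 2 := by
    intro y hy
    have h1 : |2 * u t y * ux t y| = 2 * (|u t y| * |ux t y|) := by
      rw [abs_mul, abs_mul, abs_two]; ring
    rw [h1, ← sq_abs (u t y), ← sq_abs (ux t y)]
    have h2 : 0 ≤ (16 * |u t y| - L * |ux t y|) ^ 2 := sq_nonneg _
    rw [div_mul_eq_mul_div, div_mul_eq_mul_div, div_add_div _ _ (ne_of_gt hL) (by norm_num),
      le_div_iff₀ (by positivity : (0:ℝ) < L * 16)]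
    nlinarith [hL]
  set P : ℝ := ∫ y in (0:ℝ)..L, ux t y ^ 2 with hPdef
  have hint1 : (∫ y in (0:ℝ)..L, |2 * u t y * ux t y|)
      ≤ ∫ y in (0:ℝ)..L, (16 / L * u t y ^ 2 + L / 16 * ux t y ^ 2) :=
    intervalIntegral.integral_mono_on hL.le
      (beam_ii hL.le ((continuousOn_const.mul (huC t ht)).mul (huxC t ht)).abs)
      (beam_ii hL.le ((continuousOn_const.mul ((huC t ht).pow 2)).add
        (continuousOn_const.mul ((huxC t ht).pow 2)))) hptw
  have hint2 : (∫ y in (0:ℝ)..L, (16 / L * u t y ^ 2 + L / 16 * ux t y ^ 2))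
      = 16 / L * N t + L / 16 * P := by
    rw [intervalIntegral.integral_add
      (beam_ii hL.le (continuousOn_const.fun_mul ((huC t ht).fun_pow 2)))
      (beam_ii hL.le (continuousOn_const.fun_mul ((huxC t ht).fun_pow 2))),
      intervalIntegral.integral_const_mul, intervalIntegral.integral_const_mul]
  obtain ⟨ξ', hξ'mem, hξ'⟩ := exists_hasDerivAt_eq_slope (fun y => u t y) (fun y => ux t y) hL
    (huC t ht) (fun y hy => hux t ht y (Ioo_subset_Icc_self hy))
  have hξ'bd : |ux t ξ'| ≤ 2 * M / L := by
    rw [hξ', sub_zero, abs_div, abs_of_pos hL]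
    have h1 := hMB L hLL
    have h2 := hMB 0 h0L
    have h3 : |u t L - u t 0| ≤ 2 * M := (abs_sub _ _).trans (by linarith)
    gcongr
  have hIuxx : (∫ z in (0:ℝ)..L, |uxx t z|) ≤ (L + K) / 2 := by
    have hpt : ∀ z ∈ Icc (0:ℝ) L, |uxx t z| ≤ (1 + uxx t z ^ 2) / 2 := by
      intro z hz
      nlinarith [sq_nonneg (|uxx t z| - 1), sq_abs (uxx t z)]
    have h1 : (∫ z in (0:ℝ)..L, |uxx t z|) ≤ ∫ z in (0:ℝ)..L, (1 + uxx t z ^ 2) / 2 :=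
      intervalIntegral.integral_mono_on hL.le (beam_ii hL.le (huxxC t ht).abs)
        (beam_ii hL.le ((continuousOn_const.add ((huxxC t ht).pow 2)).div_const 2)) hpt
    have e1 : (∫ z in (0:ℝ)..L, ((1:ℝ) + uxx t z ^ 2)) = L + K := by
      rw [intervalIntegral.integral_add ((intervalIntegrable_const (c := (1:ℝ))))
        (beam_ii hL.le ((huxxC t ht).fun_pow 2)), intervalIntegral.integral_const, sub_zero,
        smul_eq_mul, mul_one, hKdef]
    have e2 : (∫ z in (0:ℝ)..L, ((1:ℝ) + uxx t z ^ 2) / 2)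
        = (∫ z in (0:ℝ)..L, ((1:ℝ) + uxx t z ^ 2)) / 2 := intervalIntegral.integral_div 2 _
    rw [e2, e1] at h1
    exact h1
  have huxbd : ∀ y ∈ Icc (0:ℝ) L, ux t y ^ 2 ≤ 8 * M ^ 2 / L ^ 2 + (L + K) ^ 2 / 2 := by
    intro y hy
    have hsub : uIcc ξ' y ⊆ Icc (0:ℝ) L := uIcc_subset_Icc (Ioo_subset_Icc_self hξ'mem) hy
    have hftc : ux t y - ux t ξ' = ∫ z in ξ'..y, uxx t z := by
      have h1 := intervalIntegral.integral_eq_sub_of_hasDerivAt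
        (f := fun z => ux t z) (f' := fun z => uxx t z)
        (fun z hz => huxx t ht z (hsub hz))
        (((huxxC t ht).mono hsub).intervalIntegrable)
      linarith [h1]
    have habs2 : |∫ z in ξ'..y, uxx t z| ≤ ∫ z in (0:ℝ)..L, |uxx t z| :=
      beam_abs_sub_integral (Ioo_subset_Icc_self hξ'mem) hy (huxxC t ht)
    have h5 : |ux t y| ≤ 2 * M / L + (L + K) / 2 := by
      have ha : |ux t y| ≤ |ux t ξ'| + |ux t y - ux t ξ'| := by
        have := abs_add_le (ux t ξ') (ux t y - ux t ξ')
        simpa using this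
      have hb : |ux t y - ux t ξ'| ≤ (L + K) / 2 := by
        rw [hftc]; exact habs2.trans hIuxx
      linarith [hξ'bd]
    have h6 : ux t y ^ 2 ≤ (2 * M / L + (L + K) / 2) ^ 2 := by
      rw [← sq_abs (ux t y)]
      exact pow_le_pow_left₀ (abs_nonneg _) h5 2
    have h7 : (2 * M / L + (L + K) / 2) ^ 2 ≤ 2 * (2 * M / L) ^ 2 + 2 * ((L + K) / 2) ^ 2 := by
      nlinarith [sq_nonneg (2 * M / L - (L + K) / 2)]
    have h8 : 2 * (2 * M / L) ^ 2 = 8 * M ^ 2 / L ^ 2 := by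
      field_simp; ring
    have h9 : 2 * ((L + K) / 2) ^ 2 = (L + K) ^ 2 / 2 := by ring
    linarith
  have hPbd : P ≤ L * (8 * M ^ 2 / L ^ 2 + (L + K) ^ 2 / 2) := by
    have h1 : (∫ y in (0:ℝ)..L, ux t y ^ 2)
        ≤ ∫ y in (0:ℝ)..L, (8 * M ^ 2 / L ^ 2 + (L + K) ^ 2 / 2) :=
      intervalIntegral.integral_mono_on hL.le (beam_ii hL.le ((huxC t ht).pow 2))
        (intervalIntegrable_const) huxbd
    rw [intervalIntegral.integral_const, sub_zero, smul_eq_mul] at h1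
    rw [hPdef]
    exact h1
  have hcomb : M ^ 2 ≤ 34 * N t / L + L ^ 2 * (L + K) ^ 2 / 16 := by
    have hM2 : M ^ 2 = u t xM ^ 2 := by rw [hMdef, sq_abs]
    have h2 : (∫ y in ξ..xM, 2 * u t y * ux t y) ≤ 16 / L * N t + L / 16 * P := by
      have h3 := le_abs_self (∫ y in ξ..xM, 2 * u t y * ux t y)
      linarith [habs1, hint1, hint2.le, hint2.ge]
    have hξN : u t ξ ^ 2 ≤ N t / L := (le_div_iff₀ hL).2 (by linarith [hξbd])
    have hP2 : L / 16 * P ≤ M ^ 2 / 2 + L ^ 2 * (L + K) ^ 2 / 32 := by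
      have hcal : L / 16 * (L * (8 * M ^ 2 / L ^ 2 + (L + K) ^ 2 / 2))
          = M ^ 2 / 2 + L ^ 2 * (L + K) ^ 2 / 32 := by
        field_simp
        ring
      have hle := mul_le_mul_of_nonneg_left hPbd (by positivity : (0:ℝ) ≤ L / 16)
      linarith [hcal]
    have he : 16 / L * N t = 16 * (N t / L) := by ring
    have he2 : 34 * N t / L = 34 * (N t / L) := by ring
    rw [hM2] at *
    linarith [hsq, h2, hξN, hP2]
  have hfin : |u t x| ^ 2
      ≤ 34 * ((N 0 + eps) * Real.exp T) / L + L ^ 2 * (L + 2 * EE 0 / μ) ^ 2 / 16 := by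
    have h1 : |u t x| ≤ M := hMB x hx
    have h2 : |u t x| ^ 2 ≤ M ^ 2 := pow_le_pow_left₀ (abs_nonneg _) h1 2
    have h3 := hNbd t ht
    have h4 : 34 * N t / L ≤ 34 * ((N 0 + eps) * Real.exp T) / L := by
      gcongr
    have h5 : (L + K) ^ 2 ≤ (L + 2 * EE 0 / μ) ^ 2 := by
      nlinarith [hKle, hKnn, hL]
    have h6 : L ^ 2 * (L + K) ^ 2 / 16 ≤ L ^ 2 * (L + 2 * EE 0 / μ) ^ 2 / 16 := by
      nlinarith [sq_nonneg L]
    linarith [hcomb]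
  have hgoal : |u t x| ≤ Real.sqrt (34 * ((N 0 + eps) * Real.exp T) / L
      + L ^ 2 * (L + 2 * EE 0 / μ) ^ 2 / 16) := by
    calc |u t x| = Real.sqrt (|u t x| ^ 2) := by rw [Real.sqrt_sq_eq_abs, abs_abs]
      _ ≤ _ := Real.sqrt_le_sqrt hfin
  simp only [hepsdef, hNdef, hEEdef, heedef] at hgoal
  exact hgoal
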